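/- arXiv:0908.3556 — 3 statements merged into one kernel-verified Lean document; each statement's English description precedes it below -/
import Mathlib

section
/- Let A be a positive random variable with Lebesgue density g satisfying g(a) ≤ C₂ a^p exp(−D₂ a^d (log a)^q) for all sufficiently large a, where C₂, D₂ > 0, p ∈ ℝ, q ≥ 0 and d ≥ 1 is an integer. Then for every a > e with a^d (log a)^q > 2|p − d + 1|/(D₂ d), one has P(A > a) ≤ 2 C₂ a^{p−d+1} exp(−D₂ a^d (log a)^q)/(D₂ d (log a)^q). -/
/-!
With `u(x) = x^d (log x)^q`, the function `G(x) = x^(p+1) exp(-D u(x)) / u(x)` tends to `0` and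
`-G'(x) = x^p exp(-D u(x)) (D (d + q / log x) + (q / log x - (p - d + 1)) / u(x))`.
Since `u` increases, the hypothesis on `a` gives `|p - d + 1| / u(x) ≤ D d / 2` for `x ≥ a`, hence
`-G' ≥ (D d / 2) x^p exp(-D u)`. So `g ≤ (2 C / (D d)) (-G')` on `(a, ∞)`, and integrating gives
`P(A > a) ≤ (2 C / (D d)) G(a)`, which is the claimed bound.
-/

open MeasureTheory Real

open Filter Topology Set

theorem setIntegral_Ioi_le_of_le_neg_deriv {f F F' : ℝ → ℝ} {a : ℝ}
    (hf : ∀ x ∈ Ioi a, 0 ≤ f x) (hle : ∀ x ∈ Ioi a, f x ≤ -F' x)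
    (hF : ∀ x ∈ Ici a, HasDerivAt F (F' x) x) (hlim : Tendsto F atTop (𝓝 0)) :
    ∫ x in Ioi a, f x ≤ F a := by
  have hF' : ∀ x ∈ Ici a, HasDerivAt (fun y => -F y) (-F' x) x := fun x hx => (hF x hx).neg
  have hpos : ∀ x ∈ Ioi a, 0 ≤ -F' x := fun x hx => (hf x hx).trans (hle x hx)
  have hlim' : Tendsto (fun y => -F y) atTop (𝓝 0) := by simpa using hlim.neg
  calc ∫ x in Ioi a, f x ≤ ∫ x in Ioi a, -F' x :=
        setIntegral_mono_of_nonneg hf hle (integrableOn_Ioi_deriv_of_nonneg' hF' hpos hlim')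
    _ = F a := by simp [integral_Ioi_of_hasDerivAt_of_nonneg' hF' hpos hlim']

theorem hasDerivAt_rpow_mul_log_rpow (r q : ℝ) {x : ℝ} (hx : 1 < x) :
    HasDerivAt (fun x => x ^ r * log x ^ q) (x ^ r * log x ^ q * (r + q / log x) / x) x := by
  have hx0 : x ≠ 0 := (zero_lt_one.trans hx).ne'
  have hL : log x ≠ 0 := (log_pos hx).ne'
  have h : HasDerivAt (fun x => x ^ r * log x ^ q)
      (r * x ^ (r - 1) * log x ^ q + x ^ r * (q * log x ^ (q - 1) * x⁻¹)) x :=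
    (hasDerivAt_rpow_const (Or.inl hx0)).mul
      ((hasDerivAt_rpow_const (Or.inl hL)).comp x (hasDerivAt_log hx0))
  refine h.congr_deriv ?_
  rw [rpow_sub_one hx0, rpow_sub_one hL]
  field_simp

theorem monotoneOn_rpow_mul_log_rpow {r q : ℝ} (hr : 0 ≤ r) (hq : 0 ≤ q) :
    MonotoneOn (fun x => x ^ r * log x ^ q) (Ici 1) := by
  intro a (ha : 1 ≤ a) x _ hax
  have ha0 : 0 < a := zero_lt_one.trans_le ha
  exact mul_le_mul (rpow_le_rpow ha0.le hax hr)
    (rpow_le_rpow (log_nonneg ha) (log_le_log ha0 hax) hq)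
    (rpow_nonneg (log_nonneg ha) q) (rpow_nonneg (ha0.le.trans hax) r)

noncomputable def tailMajorant (D p q d x : ℝ) : ℝ :=
  x ^ (p + 1) * exp (-D * (x ^ d * log x ^ q)) / (x ^ d * log x ^ q)

noncomputable def tailMajorantDeriv (D p q d x : ℝ) : ℝ :=
  -(x ^ p * exp (-D * (x ^ d * log x ^ q)) *
    (D * (d + q / log x) + (q / log x - (p - d + 1)) / (x ^ d * log x ^ q)))

section tailMajorant

variable {D p q d : ℝ}

theorem hasDerivAt_tailMajorant {x : ℝ} (hx : 1 < x) :
    HasDerivAt (tailMajorant D p q d) (tailMajorantDeriv D p q d x) x := by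
  have hx0 : x ≠ 0 := (zero_lt_one.trans hx).ne'
  have hL : log x ≠ 0 := (log_pos hx).ne'
  have hxd : x ^ d ≠ 0 := (rpow_pos_of_pos (zero_lt_one.trans hx) d).ne'
  have hLq : log x ^ q ≠ 0 := (rpow_pos_of_pos (log_pos hx) q).ne'
  have hu := hasDerivAt_rpow_mul_log_rpow d q hx
  have h := ((hasDerivAt_rpow_const (p := p + 1) (Or.inl hx0)).mul
    ((hu.const_mul (-D)).exp)).div hu (mul_ne_zero hxd hLq)
  refine h.congr_deriv ?_
  rw [tailMajorantDeriv, Pi.mul_apply, add_sub_cancel_right, rpow_add_one hx0]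
  field_simp
  ring

theorem tendsto_tailMajorant (hD : 0 < D) (hq : 0 ≤ q) (hd : 1 ≤ d) :
    Tendsto (tailMajorant D p q d) atTop (𝓝 0) := by
  refine tendsto_of_tendsto_of_tendsto_of_le_of_le' tendsto_const_nhds
    (tendsto_rpow_mul_exp_neg_mul_atTop_nhds_zero (p + 1) D hD) ?_ ?_
  · filter_upwards [eventually_gt_atTop 1] with x hx
    have := log_pos hx
    unfold tailMajorant
    positivity
  · filter_upwards [eventually_ge_atTop (exp 1)] with x hx
    have hx1 : 1 ≤ x := (one_le_exp zero_le_one).trans hx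
    have hx0 : 0 < x := zero_lt_one.trans_le hx1
    have hL : 1 ≤ log x := (le_log_iff_exp_le hx0).2 hx
    have hu : x ≤ x ^ d * log x ^ q :=
      calc x ≤ x ^ d := self_le_rpow_of_one_le hx1 hd
        _ ≤ x ^ d * log x ^ q := le_mul_of_one_le_right (by positivity) (one_le_rpow hL hq)
    unfold tailMajorant
    calc x ^ (p + 1) * exp (-D * (x ^ d * log x ^ q)) / (x ^ d * log x ^ q)
        ≤ x ^ (p + 1) * exp (-D * (x ^ d * log x ^ q)) :=
          div_le_self (by positivity) (hx1.trans hu)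
      _ ≤ x ^ (p + 1) * exp (-D * x) := by
          gcongr x ^ (p + 1) * exp ?_
          nlinarith

theorem half_mul_le_neg_tailMajorantDeriv (hD : 0 < D) (hq : 0 ≤ q) (hd : 0 < d) {x : ℝ}
    (hx : 1 < x) (hu : 2 * |p - d + 1| / (D * d) ≤ x ^ d * log x ^ q) :
    D * d / 2 * (x ^ p * exp (-D * (x ^ d * log x ^ q))) ≤ -tailMajorantDeriv D p q d x := by
  have hL := log_pos hx
  have hu0 : 0 < x ^ d * log x ^ q :=
    mul_pos (rpow_pos_of_pos (zero_lt_one.trans hx) d) (rpow_pos_of_pos hL q)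
  have hrem : (p - d + 1) / (x ^ d * log x ^ q) ≤ D * d / 2 := by
    rw [div_le_iff₀ hu0]
    rw [div_le_iff₀ (by positivity)] at hu
    nlinarith [le_abs_self (p - d + 1)]
  have : 0 ≤ q / log x := by positivity
  have : 0 ≤ q / log x / (x ^ d * log x ^ q) := by positivity
  have : 0 < x := zero_lt_one.trans hx
  rw [tailMajorantDeriv, neg_neg, mul_comm]
  gcongr
  rw [sub_div]
  nlinarith

end tailMajorant

theorem stmt_0_general {Ω : Type*} [MeasurableSpace Ω] (P : Measure Ω)
    (A : Ω → ℝ)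
    (g : ℝ → ℝ) (hg0 : ∀ s, 0 ≤ g s)
    (hdens : ∀ s : ℝ, (P {ω | s < A ω}).toReal = ∫ x in Set.Ioi s, g x)
    (C₂ D₂ p q : ℝ) (hC₂ : 0 < C₂) (hD₂ : 0 < D₂) (hq : 0 ≤ q)
    (d : ℕ) (hd : 1 ≤ d)
    (a₀ : ℝ)
    (hg : ∀ s, a₀ ≤ s →
      g s ≤ C₂ * s ^ p * Real.exp (-D₂ * s ^ (d : ℝ) * Real.log s ^ q))
    (a : ℝ) (ha₀ : a₀ ≤ a) (hae : Real.exp 1 < a)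
    (hcond : 2 * |p - d + 1| / (D₂ * d) < a ^ (d : ℝ) * Real.log a ^ q) :
    (P {ω | a < A ω}).toReal ≤
      2 * C₂ * a ^ (p - d + 1) * Real.exp (-D₂ * a ^ (d : ℝ) * Real.log a ^ q) /
        (D₂ * d * Real.log a ^ q) := by
  have hd1 : (1 : ℝ) ≤ d := Nat.one_le_cast.2 hd
  have hd0 : (0 : ℝ) < d := zero_lt_one.trans_le hd1
  have ha1 : 1 < a := (one_lt_exp_iff.2 one_pos).trans hae
  set c := 2 * C₂ / (D₂ * d) with hc
  have hbound : ∀ x ∈ Ioi a, g x ≤ -(c * tailMajorantDeriv D₂ p q d x) := by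
    intro x (hax : a < x)
    have hderiv := half_mul_le_neg_tailMajorantDeriv hD₂ hq hd0 (ha1.trans hax)
      (hcond.le.trans (monotoneOn_rpow_mul_log_rpow hd0.le hq ha1.le (ha1.trans hax).le hax.le))
    calc g x ≤ C₂ * x ^ p * exp (-D₂ * x ^ (d : ℝ) * log x ^ q) := hg x (ha₀.trans hax.le)
      _ = c * (D₂ * d / 2 * (x ^ p * exp (-D₂ * (x ^ (d : ℝ) * log x ^ q)))) := by
        rw [hc, mul_assoc (-D₂)]
        field_simp
      _ ≤ -(c * tailMajorantDeriv D₂ p q d x) := by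
        rw [← mul_neg]
        gcongr
  rw [hdens a]
  calc ∫ x in Ioi a, g x ≤ c * tailMajorant D₂ p q d a :=
        setIntegral_Ioi_le_of_le_neg_deriv (fun x _ => hg0 x) hbound
          (fun x hx => (hasDerivAt_tailMajorant (ha1.trans_le hx)).const_mul c)
          (by simpa using (tendsto_tailMajorant hD₂ hq hd1).const_mul c)
    _ = _ := by
      rw [hc, tailMajorant, show p - d + 1 = p + 1 - d by ring, rpow_sub (zero_lt_one.trans ha1),
        mul_assoc (-D₂)]
      field_simp

/-- Tail bound for a positive random variable with a Lebesgue density `g`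
satisfying `g(a) ≤ C₂ a^p exp(−D₂ a^d (log a)^q)` for all sufficiently large
`a`. Then for every `a > e` (beyond the threshold) with
`a^d (log a)^q > 2|p − d + 1|/(D₂ d)`, one has
`P(A > a) ≤ 2 C₂ a^{p−d+1} exp(−D₂ a^d (log a)^q)/(D₂ d (log a)^q)`. -/
theorem stmt_0 {Ω : Type*} [MeasurableSpace Ω] (P : Measure Ω)
    [IsProbabilityMeasure P] (A : Ω → ℝ) (hA : Measurable A)
    (hApos : ∀ ω, 0 < A ω)
    (g : ℝ → ℝ) (hg0 : ∀ s, 0 ≤ g s)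
    (hdens : ∀ s : ℝ, (P {ω | s < A ω}).toReal = ∫ x in Set.Ioi s, g x)
    (C₂ D₂ p q : ℝ) (hC₂ : 0 < C₂) (hD₂ : 0 < D₂) (hq : 0 ≤ q)
    (d : ℕ) (hd : 1 ≤ d)
    (a₀ : ℝ)
    (hg : ∀ s, a₀ ≤ s →
      g s ≤ C₂ * s ^ p * Real.exp (-D₂ * s ^ (d : ℝ) * Real.log s ^ q))
    (a : ℝ) (ha₀ : a₀ ≤ a) (hae : Real.exp 1 < a)
    (hcond : 2 * |p - d + 1| / (D₂ * d) < a ^ (d : ℝ) * Real.log a ^ q) :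
    (P {ω | a < A ω}).toReal ≤
      2 * C₂ * a ^ (p - d + 1) * Real.exp (-D₂ * a ^ (d : ℝ) * Real.log a ^ q) /
        (D₂ * d * Real.log a ^ q) :=
  stmt_0_general P A g hg0 hdens C₂ D₂ p q hC₂ hD₂ hq d hd a₀ hg a ha₀ hae hcond
end

section
/- The quantile function Φ^{−1} of the standard normal distribution satisfies −√(2 log(1/u)) ≤ Φ^{−1}(u) for every u ∈ (0,1). -/
/-! On the half-line `t ≤ x ≤ 0` one has `t² ≥ x² + (t - x)²`, so the Gaussian density
satisfies `exp (-t²/2) ≤ exp (-x²/2) * exp (-(t - x)²/2)`. Integrating the translated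
Gaussian over the whole line gives the tail bound `Φ x ≤ exp (-x²/2)` for `x ≤ 0`, and taking
logarithms at `u = Φ x` gives `x² ≤ 2 log (1/u)`. For `x ≥ 0` the claim is trivial. -/

open MeasureTheory Real Set

/-- The standard normal cumulative distribution function. -/
noncomputable def stdNormalCDF (x : ℝ) : ℝ :=
  (Real.sqrt (2 * Real.pi))⁻¹ * ∫ t in Set.Iic x, Real.exp (-t ^ 2 / 2)

lemma exp_neg_sq_div_two_eq (t : ℝ) : exp (-t ^ 2 / 2) = exp (-(1 / 2) * t ^ 2) := by
  ring_nf

lemma integrable_exp_neg_sq_div_two : Integrable fun t : ℝ => exp (-t ^ 2 / 2) := by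
  simpa only [exp_neg_sq_div_two_eq] using integrable_exp_neg_mul_sq (by norm_num : (0 : ℝ) < 1 / 2)

lemma integral_exp_neg_sq_div_two : ∫ t : ℝ, exp (-t ^ 2 / 2) = √(2 * π) := by
  simp only [exp_neg_sq_div_two_eq, integral_gaussian]
  congr 1
  ring

lemma exp_neg_sq_div_two_le_of_le_of_nonpos {t x : ℝ} (htx : t ≤ x) (hx : x ≤ 0) :
    exp (-t ^ 2 / 2) ≤ exp (-x ^ 2 / 2) * exp (-(t - x) ^ 2 / 2) := by
  rw [← exp_add]
  gcongr
  nlinarith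

lemma stdNormalCDF_le_exp_neg_sq_div_two {x : ℝ} (hx : x ≤ 0) :
    stdNormalCDF x ≤ exp (-x ^ 2 / 2) := by
  have hshift : Integrable fun t : ℝ => exp (-(t - x) ^ 2 / 2) :=
    integrable_exp_neg_sq_div_two.comp_sub_right x
  have hbound : ∫ t in Iic x, exp (-t ^ 2 / 2) ≤ exp (-x ^ 2 / 2) * √(2 * π) :=
    calc ∫ t in Iic x, exp (-t ^ 2 / 2)
        ≤ ∫ t in Iic x, exp (-x ^ 2 / 2) * exp (-(t - x) ^ 2 / 2) :=
          setIntegral_mono_on integrable_exp_neg_sq_div_two.integrableOn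
            (hshift.const_mul _).integrableOn measurableSet_Iic
            fun t ht => exp_neg_sq_div_two_le_of_le_of_nonpos ht hx
      _ ≤ ∫ t, exp (-x ^ 2 / 2) * exp (-(t - x) ^ 2 / 2) :=
          setIntegral_le_integral (hshift.const_mul _) (.of_forall fun _ => by positivity)
      _ = exp (-x ^ 2 / 2) * √(2 * π) := by
          rw [integral_const_mul, integral_sub_right_eq_self (fun t => exp (-t ^ 2 / 2)),
            integral_exp_neg_sq_div_two]
  have hpos : 0 < √(2 * π) := by positivity
  calc stdNormalCDF x ≤ (√(2 * π))⁻¹ * (exp (-x ^ 2 / 2) * √(2 * π)) :=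
        mul_le_mul_of_nonneg_left hbound (by positivity)
    _ = exp (-x ^ 2 / 2) := by field_simp

lemma neg_sqrt_two_mul_log_one_div_le {u x : ℝ} (hu : 0 < u) (hux : u ≤ exp (-x ^ 2 / 2)) :
    -√(2 * log (1 / u)) ≤ x := by
  have hsq : x ^ 2 ≤ 2 * log (1 / u) := by
    have := log_le_log hu hux
    rw [log_exp] at this
    rw [one_div, log_inv]
    linarith
  linarith [neg_abs_le x, abs_le_sqrt hsq]

/-- The standard normal quantile function satisfies
`−√(2 log(1/u)) ≤ Φ⁻¹(u)` for every `u ∈ (0,1)`: if `Φ x = u` then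
`−√(2 log(1/u)) ≤ x`. -/
theorem stmt_2 (u x : ℝ) (hu : u ∈ Set.Ioo (0 : ℝ) 1)
    (hx : stdNormalCDF x = u) :
    -Real.sqrt (2 * Real.log (1 / u)) ≤ x := by
  rcases le_or_gt 0 x with hx0 | hx0
  · exact (neg_nonpos.2 (sqrt_nonneg _)).trans hx0
  · exact neg_sqrt_two_mul_log_one_div_le hu.1 (hx ▸ stdNormalCDF_le_exp_neg_sq_div_two hx0.le)
end

section
/- Let ν be a finite complex Borel measure on ℝ^d whose total variation measure ‖ν‖ satisfies ∫ exp(δ‖λ‖/2) d‖ν‖(λ) < ∞ for some δ > 0. If ∫ ⟨λ, z⟩^n dν(λ) = 0 for every nonnegative integer n and every z ∈ ℝ^d, then ν is the zero measure. -/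
/-!
Let `g` be the real or imaginary part of `f` and write `g = g⁺ - g⁻`. The finite measures `g⁺ μ`
and `g⁻ μ` have the same moments `∫ ⟪x, z⟫ ^ n` for every `z`. Their images under `⟪·, z⟫` are
finite measures on `ℝ` with an exponential moment, so their complex moment generating functions
are holomorphic on a vertical strip around the imaginary axis and have the same Taylor series
at `0`. By the identity theorem they agree on the strip, in particular on the imaginary axis,
where they are characteristic functions. Hence the images agree for every `z`, so `g⁺ μ` and
`g⁻ μ` have the same characteristic function and are equal.
-/

open MeasureTheory ProbabilityTheory Complex
open scoped Nat RealInnerProductSpace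

lemma pow_le_factorial_div_pow_mul_exp {x c : ℝ} (hx : 0 ≤ x) (hc : 0 < c) (n : ℕ) :
    x ^ n ≤ n ! / c ^ n * Real.exp (c * x) := by
  have h := Real.pow_div_factorial_le_exp (c * x) (mul_nonneg hc.le hx) n
  rw [mul_pow, div_le_iff₀ (by positivity)] at h
  rw [div_mul_eq_mul_div, le_div_iff₀ (by positivity)]
  linarith

lemma Ioo_subset_integrableExpSet_id {ν : Measure ℝ} {c : ℝ}
    (h : Integrable (fun x => Real.exp (c * |x|)) ν) :
    Set.Ioo (-c) c ⊆ integrableExpSet id ν := by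
  intro t ht
  refine h.mono' (by fun_prop) (ae_of_all _ fun x => ?_)
  rw [Real.norm_of_nonneg (Real.exp_nonneg _), Real.exp_le_exp, id]
  calc t * x ≤ |t| * |x| := by rw [← abs_mul]; exact le_abs_self _
    _ ≤ c * |x| := by gcongr; exact abs_lt.2 ht |>.le

lemma complexMGF_id_eq_tsum_moments {ν : Measure ℝ} {c : ℝ}
    (h : Integrable (fun x => Real.exp (c * |x|)) ν) {z : ℂ} (hz : ‖z‖ < c) :
    complexMGF id ν z = ∑' n : ℕ, (n ! : ℂ)⁻¹ * ((∫ x, x ^ n ∂ν : ℝ) : ℂ) * z ^ n := by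
  have hball : ∀ w ∈ Metric.ball (0 : ℂ) c, w.re ∈ interior (integrableExpSet id ν) := by
    intro w hw
    refine interior_maximal (Ioo_subset_integrableExpSet_id h) isOpen_Ioo (abs_lt.1 ?_)
    exact (abs_re_le_norm w).trans_lt (mem_ball_zero_iff.1 hw)
  have h0 : (0 : ℂ).re ∈ interior (integrableExpSet id ν) :=
    hball 0 (Metric.mem_ball_self ((norm_nonneg z).trans_lt hz))
  rw [← taylorSeries_eq_on_ball' (c := 0) (z := z) (mem_ball_zero_iff.2 hz)
    (differentiableOn_complexMGF.mono hball)]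
  congr 1 with n
  rw [iteratedDeriv_complexMGF h0, sub_zero, ← integral_complex_ofReal]
  simp

theorem MeasureTheory.Measure.ext_of_forall_integral_pow_eq {ν₁ ν₂ : Measure ℝ}
    [IsFiniteMeasure ν₁] [IsFiniteMeasure ν₂] {c : ℝ} (hc : 0 < c)
    (h₁ : Integrable (fun x => Real.exp (c * |x|)) ν₁)
    (h₂ : Integrable (fun x => Real.exp (c * |x|)) ν₂)
    (h : ∀ n : ℕ, ∫ x, x ^ n ∂ν₁ = ∫ x, x ^ n ∂ν₂) : ν₁ = ν₂ := by
  set U : Set ℂ := re ⁻¹' Set.Ioo (-c) c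
  have hanalytic : ∀ ν : Measure ℝ, Integrable (fun x => Real.exp (c * |x|)) ν →
      AnalyticOnNhd ℂ (complexMGF id ν) U := fun ν hν =>
    analyticOnNhd_complexMGF.mono fun w hw =>
      interior_maximal (Ioo_subset_integrableExpSet_id hν) isOpen_Ioo hw
  have hnear : complexMGF id ν₁ =ᶠ[nhds 0] complexMGF id ν₂ := by
    filter_upwards [Metric.ball_mem_nhds (0 : ℂ) hc] with w hw
    rw [mem_ball_zero_iff] at hw
    simp only [complexMGF_id_eq_tsum_moments h₁ hw, complexMGF_id_eq_tsum_moments h₂ hw, h]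
  have hstrip : Set.EqOn (complexMGF id ν₁) (complexMGF id ν₂) U :=
    (hanalytic ν₁ h₁).eqOn_of_preconnected_of_eventuallyEq (hanalytic ν₂ h₂)
      ((convex_Ioo _ _).linear_preimage reLm).isPreconnected (by simp [U, hc]) hnear
  refine Measure.ext_of_charFun (funext fun t => ?_)
  rw [← complexMGF_id_mul_I, ← complexMGF_id_mul_I]
  exact hstrip (by simp [U, hc])

section WithDensity

variable {α : Type*} [MeasurableSpace α] {μ : Measure α}

lemma integral_withDensity_ofReal {p : α → ℝ} (hp : AEMeasurable p μ) (hp0 : ∀ x, 0 ≤ p x)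
    (F : α → ℝ) :
    ∫ x, F x ∂μ.withDensity (fun x => ENNReal.ofReal (p x)) = ∫ x, p x * F x ∂μ := by
  rw [integral_withDensity_eq_integral_toReal_smul₀ hp.ennreal_ofReal
    (ae_of_all _ fun _ => ENNReal.ofReal_lt_top)]
  simp only [ENNReal.toReal_ofReal (hp0 _), smul_eq_mul]

lemma integrable_withDensity_ofReal {p : α → ℝ} (hp : AEMeasurable p μ) (hp0 : ∀ x, 0 ≤ p x)
    {F : α → ℝ} (hF : Integrable (fun x => F x * p x) μ) :
    Integrable F (μ.withDensity fun x => ENNReal.ofReal (p x)) := by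
  rw [integrable_withDensity_iff_integrable_smul₀' hp.ennreal_ofReal
    (ae_of_all _ fun _ => ENNReal.ofReal_lt_top)]
  simpa only [ENNReal.toReal_ofReal (hp0 _), smul_eq_mul, mul_comm] using hF

end WithDensity

section InnerProductSpace

variable {E : Type*} [NormedAddCommGroup E] [InnerProductSpace ℝ E] [MeasurableSpace E]
  [BorelSpace E] {μ : Measure E} {c : ℝ}

lemma integrable_inner_pow_smul {F : Type*} [NormedAddCommGroup F] [NormedSpace ℝ F]
    {g : E → F} (hc : 0 < c) (hg : AEStronglyMeasurable g μ)
    (h : Integrable (fun x => Real.exp (c * ‖x‖) * ‖g x‖) μ) (n : ℕ) (z : E) :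
    Integrable (fun x => ⟪x, z⟫ ^ n • g x) μ := by
  refine (h.const_mul (‖z‖ ^ n * (n ! / c ^ n))).mono' (by fun_prop) (ae_of_all _ fun x => ?_)
  calc ‖⟪x, z⟫ ^ n • g x‖ = |⟪x, z⟫| ^ n * ‖g x‖ := by
        rw [norm_smul, norm_pow, Real.norm_eq_abs]
    _ ≤ (‖z‖ * ‖x‖) ^ n * ‖g x‖ := by
        gcongr
        rw [mul_comm]
        exact abs_real_inner_le_norm x z
    _ = ‖z‖ ^ n * ‖x‖ ^ n * ‖g x‖ := by rw [mul_pow]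
    _ ≤ ‖z‖ ^ n * (n ! / c ^ n * Real.exp (c * ‖x‖)) * ‖g x‖ := by
        gcongr
        exact pow_le_factorial_div_pow_mul_exp (norm_nonneg x) hc n
    _ = ‖z‖ ^ n * (n ! / c ^ n) * (Real.exp (c * ‖x‖) * ‖g x‖) := by ring

variable [SecondCountableTopology E] [CompleteSpace E]

theorem MeasureTheory.Measure.ext_of_forall_integral_inner_pow_eq {ρ₁ ρ₂ : Measure E}
    [IsFiniteMeasure ρ₁] [IsFiniteMeasure ρ₂] (hc : 0 < c)
    (h₁ : Integrable (fun x => Real.exp (c * ‖x‖)) ρ₁)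
    (h₂ : Integrable (fun x => Real.exp (c * ‖x‖)) ρ₂)
    (h : ∀ (n : ℕ) (z : E), ∫ x, ⟪x, z⟫ ^ n ∂ρ₁ = ∫ x, ⟪x, z⟫ ^ n ∂ρ₂) : ρ₁ = ρ₂ := by
  refine Measure.ext_of_charFun (funext fun z => ?_)
  have hz : Continuous fun x : E => ⟪x, z⟫ := continuous_id.inner continuous_const
  set c' := c / (‖z‖ + 1)
  have hc' : c' * ‖z‖ ≤ c := by
    rw [div_mul_eq_mul_div, div_le_iff₀ (by positivity)]
    nlinarith [norm_nonneg z]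
  have hexp : ∀ ρ : Measure E, Integrable (fun x => Real.exp (c * ‖x‖)) ρ →
      Integrable (fun y => Real.exp (c' * |y|)) (ρ.map fun x => ⟪x, z⟫) := by
    intro ρ hρ
    rw [integrable_map_measure (by fun_prop) hz.aemeasurable]
    refine hρ.mono' (by fun_prop) (ae_of_all _ fun x => ?_)
    simp only [Function.comp_apply, Real.norm_eq_abs, Real.abs_exp, Real.exp_le_exp]
    calc c' * |⟪x, z⟫| ≤ c' * (‖x‖ * ‖z‖) := by
          gcongr
          exact abs_real_inner_le_norm x z
      _ = (c' * ‖z‖) * ‖x‖ := by ring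
      _ ≤ c * ‖x‖ := by gcongr
  have hmap : ρ₁.map (fun x => ⟪x, z⟫) = ρ₂.map (fun x => ⟪x, z⟫) := by
    refine Measure.ext_of_forall_integral_pow_eq (by positivity) (hexp ρ₁ h₁) (hexp ρ₂ h₂)
      fun n => ?_
    rw [integral_map hz.aemeasurable (by fun_prop), integral_map hz.aemeasurable (by fun_prop)]
    exact h n z
  have hchar : ∀ ρ : Measure E, charFun ρ z = charFun (ρ.map fun x => ⟪x, z⟫) 1 := by
    intro ρ
    rw [charFun_apply, charFun_apply_real, integral_map hz.aemeasurable (by fun_prop)]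
    simp
  rw [hchar, hchar, hmap]

lemma ae_eq_of_forall_integral_inner_pow_mul_eq {p q : E → ℝ} (hc : 0 < c)
    (hp : AEMeasurable p μ) (hq : AEMeasurable q μ) (hp0 : ∀ x, 0 ≤ p x) (hq0 : ∀ x, 0 ≤ q x)
    (hpexp : Integrable (fun x => Real.exp (c * ‖x‖) * p x) μ)
    (hqexp : Integrable (fun x => Real.exp (c * ‖x‖) * q x) μ)
    (h : ∀ (n : ℕ) (z : E), ∫ x, ⟪x, z⟫ ^ n * p x ∂μ = ∫ x, ⟪x, z⟫ ^ n * q x ∂μ) :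
    p =ᵐ[μ] q := by
  have hint : ∀ {r : E → ℝ}, AEMeasurable r μ → (∀ x, 0 ≤ r x) →
      Integrable (fun x => Real.exp (c * ‖x‖) * r x) μ → Integrable r μ := fun hrm hr0 hr =>
    hr.mono' hrm.aestronglyMeasurable (ae_of_all _ fun x => by
      rw [Real.norm_of_nonneg (hr0 x)]
      exact le_mul_of_one_le_left (hr0 x) (Real.one_le_exp (by positivity)))
  have : IsFiniteMeasure (μ.withDensity fun x => ENNReal.ofReal (p x)) :=
    isFiniteMeasure_withDensity_ofReal (hint hp hp0 hpexp).hasFiniteIntegral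
  have : IsFiniteMeasure (μ.withDensity fun x => ENNReal.ofReal (q x)) :=
    isFiniteMeasure_withDensity_ofReal (hint hq hq0 hqexp).hasFiniteIntegral
  have hpq : μ.withDensity (fun x => ENNReal.ofReal (p x)) =
      μ.withDensity (fun x => ENNReal.ofReal (q x)) := by
    refine Measure.ext_of_forall_integral_inner_pow_eq hc
      (integrable_withDensity_ofReal hp hp0 hpexp) (integrable_withDensity_ofReal hq hq0 hqexp)
      fun n z => ?_
    simpa only [integral_withDensity_ofReal hp hp0, integral_withDensity_ofReal hq hq0,
      mul_comm] using h n z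
  rw [withDensity_eq_iff hp.ennreal_ofReal hq.ennreal_ofReal
    (hint hp hp0 hpexp).lintegral_lt_top.ne] at hpq
  filter_upwards [hpq] with x hx
  exact (ENNReal.ofReal_eq_ofReal_iff (hp0 x) (hq0 x)).1 hx

lemma ae_eq_zero_of_forall_integral_inner_pow_mul_eq_zero {g : E → ℝ} (hc : 0 < c)
    (hg : AEMeasurable g μ) (hexp : Integrable (fun x => Real.exp (c * ‖x‖) * |g x|) μ)
    (h : ∀ (n : ℕ) (z : E), ∫ x, ⟪x, z⟫ ^ n * g x ∂μ = 0) :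
    g =ᵐ[μ] 0 := by
  have hpart : ∀ r : E → ℝ, AEMeasurable r μ → (∀ x, |r x| = |g x|) →
      Integrable (fun x => Real.exp (c * ‖x‖) * max (r x) 0) μ ∧
      ∀ n z, Integrable (fun x => ⟪x, z⟫ ^ n * max (r x) 0) μ := by
    intro r hr hrg
    have hr' : Integrable (fun x => Real.exp (c * ‖x‖) * ‖max (r x) 0‖) μ := by
      refine hexp.mono' (by fun_prop) (ae_of_all _ fun x => ?_)
      rw [norm_mul, norm_norm, Real.norm_eq_abs, Real.abs_exp, ← hrg]
      gcongr
      exact abs_max_le_max_abs_abs.trans (by simp)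
    refine ⟨hr'.congr (ae_of_all _ fun x => ?_), fun n z =>
      integrable_inner_pow_smul hc (hr.max aemeasurable_const).aestronglyMeasurable hr' n z⟩
    simp
  obtain ⟨hpexp, hpint⟩ := hpart g hg fun _ => rfl
  obtain ⟨hqexp, hqint⟩ := hpart (fun x => -g x) hg.neg fun _ => abs_neg _
  have hpq : ∀ (n : ℕ) (z : E),
      ∫ x, ⟪x, z⟫ ^ n * max (g x) 0 ∂μ = ∫ x, ⟪x, z⟫ ^ n * max (-g x) 0 ∂μ := by
    intro n z
    rw [← sub_eq_zero, ← integral_sub (hpint n z) (hqint n z)]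
    simpa only [← mul_sub, max_zero_sub_max_neg_zero_eq_self] using h n z
  filter_upwards [ae_eq_of_forall_integral_inner_pow_mul_eq hc (hg.max aemeasurable_const)
    (hg.neg.max aemeasurable_const) (fun _ => le_max_right _ _) (fun _ => le_max_right _ _)
    hpexp hqexp hpq] with x hx
  rw [Pi.zero_apply, ← max_zero_sub_max_neg_zero_eq_self (g x)]
  exact sub_eq_zero.2 hx

end InnerProductSpace

theorem stmt_6_general {d : ℕ} (μ : Measure (EuclideanSpace ℝ (Fin d)))
    (f : EuclideanSpace ℝ (Fin d) → ℂ)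
    (hf : AEStronglyMeasurable f μ)
    (δ : ℝ) (hδ : 0 < δ)
    (hmom : Integrable (fun l => Real.exp (δ * ‖l‖ / 2) * ‖f l‖) μ)
    (hpoly : ∀ (n : ℕ) (z : EuclideanSpace ℝ (Fin d)),
      ∫ l, ((inner ℝ l z : ℝ) : ℂ) ^ n * f l ∂μ = 0) :
    f =ᵐ[μ] 0 := by
  have hexp : Integrable (fun l => Real.exp (δ / 2 * ‖l‖) * ‖f l‖) μ := by
    simpa only [mul_div_right_comm] using hmom
  have hcomponent : ∀ L : ℂ →L[ℝ] ℝ, (fun l => L (f l)) =ᵐ[μ] 0 := by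
    intro L
    refine ae_eq_zero_of_forall_integral_inner_pow_mul_eq_zero (half_pos hδ)
      (L.continuous.comp_aestronglyMeasurable hf).aemeasurable
      ((hexp.const_mul ‖L‖).mono' (by fun_prop) (ae_of_all _ fun l => ?_)) fun n z => ?_
    · rw [norm_mul, Real.norm_eq_abs, Real.abs_exp, Real.norm_eq_abs, abs_abs, mul_left_comm]
      gcongr
      exact L.le_opNorm (f l)
    · simp only [← smul_eq_mul, ← L.map_smul]
      rw [L.integral_comp_comm (integrable_inner_pow_smul (half_pos hδ) hf hexp n z)]
      simpa [Complex.real_smul] using congrArg L (hpoly n z)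
  filter_upwards [hcomponent Complex.reCLM, hcomponent Complex.imCLM] with l hre him
  exact Complex.ext hre him

/-- Let `ν` be a finite complex Borel measure on `ℝ^d`, represented as
`ν = f • μ` with `μ` a (σ-finite) positive measure and `f` a complex density,
so that the total variation of `ν` is `‖f‖ • μ`. Assume
`∫ exp(δ‖λ‖/2) d‖ν‖(λ) < ∞` for some `δ > 0`. If
`∫ ⟨λ, z⟩^n dν(λ) = 0` for every `n ∈ ℕ` and every `z ∈ ℝ^d`, then `ν` is the
zero measure, i.e. `f = 0` μ-almost everywhere. -/
theorem stmt_6 {d : ℕ} (μ : Measure (EuclideanSpace ℝ (Fin d)))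
    [SigmaFinite μ] (f : EuclideanSpace ℝ (Fin d) → ℂ)
    (hf : AEStronglyMeasurable f μ)
    (δ : ℝ) (hδ : 0 < δ)
    (hmom : Integrable (fun l => Real.exp (δ * ‖l‖ / 2) * ‖f l‖) μ)
    (hpoly : ∀ (n : ℕ) (z : EuclideanSpace ℝ (Fin d)),
      ∫ l, ((inner ℝ l z : ℝ) : ℂ) ^ n * f l ∂μ = 0) :
    f =ᵐ[μ] 0 :=
  stmt_6_general μ f hf δ hδ hmom hpoly
end
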